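/- arXiv:1905.10398 — 7 statements merged into one kernel-verified Lean document; each statement's English description precedes it below -/
import Mathlib

section
/- For α ∈ ℝ, λ > 0 with λ + α > 0, and r > 0, the function g(x) = e^{−λx} is an eigenfunction of the operator f(x) ↦ e^{αx} · C_D_∞^r[e^{−αx} f(x)] with eigenvalue (λ + α)^r, where C_D_∞^r is the right Caputo fractional derivative on (x, ∞). -/
/-!
With `n = ⌊r⌋₊ + 1` the `n`-th derivative of `e^{-μy}` is `(-μ)^n e^{-μy}`, and the
substitution `y = x + t` turns the Caputo integral into
`e^{-μx} ∫₀^∞ t^{n-r-1} e^{-μt} dt = e^{-μx} Γ(n-r) / μ^{n-r}`.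
The sign `(-1)^n` in the definition cancels that of `(-μ)^n` and `Γ(n-r)` cancels, leaving
`μ^r e^{-μx}`. The theorem is the case `μ = λ + α`, since `e^{-αy} e^{-λy} = e^{-(λ+α)y}`.
-/

open MeasureTheory

/-- Right Caputo fractional derivative of order `r` with upper limit `∞`. -/
noncomputable def caputoInf (r : ℝ) (f : ℝ → ℝ) : ℝ → ℝ :=
  fun x => ((-1 : ℝ) ^ (⌊r⌋₊ + 1) / Real.Gamma ((⌊r⌋₊ + 1 : ℕ) - r)) *
    ∫ y in Set.Ioi x,
      (y - x) ^ (((⌊r⌋₊ + 1 : ℕ) : ℝ) - r - 1) * iteratedDeriv (⌊r⌋₊ + 1) f y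

open Real Set

lemma integral_Ioi_eq_integral_Ioi_zero_add {E : Type*} [NormedAddCommGroup E] [NormedSpace ℝ E]
    (g : ℝ → E) (x : ℝ) :
    ∫ y in Ioi x, g y = ∫ t in Ioi 0, g (t + x) := by
  rw [← (measurePreserving_add_right volume x).setIntegral_preimage_emb
    (MeasurableEquiv.addRight x).measurableEmbedding g (Ioi x)]
  congr 1
  ext t
  simp

lemma integral_Ioi_rpow_sub_mul_exp_neg_mul {s μ : ℝ} (hs : 0 < s) (hμ : 0 < μ) (x : ℝ) :
    ∫ y in Ioi x, (y - x) ^ (s - 1) * exp (-μ * y) = exp (-μ * x) * ((1 / μ) ^ s * Gamma s) := by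
  have hshift : ∀ t ∈ Ioi (0 : ℝ), (t + x - x) ^ (s - 1) * exp (-μ * (t + x))
      = exp (-μ * x) * (t ^ (s - 1) * exp (-(μ * t))) := by
    intro t _
    rw [add_sub_cancel_right, show -μ * (t + x) = -(μ * t) + -μ * x by ring, exp_add]
    ring
  rw [integral_Ioi_eq_integral_Ioi_zero_add, setIntegral_congr_fun measurableSet_Ioi hshift,
    integral_const_mul, integral_rpow_mul_exp_neg_mul_Ioi hs hμ]

theorem caputoInf_exp_neg_mul {μ : ℝ} (hμ : 0 < μ) (r x : ℝ) :
    caputoInf r (fun y => exp (-μ * y)) x = μ ^ r * exp (-μ * x) := by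
  simp_rw [caputoInf, iteratedDeriv_exp_const_mul, mul_left_comm _ ((-μ) ^ (⌊r⌋₊ + 1))]
  set n := ⌊r⌋₊ + 1
  have hs : 0 < (n : ℝ) - r := sub_pos.2 (by exact_mod_cast Nat.lt_floor_add_one r)
  have hGamma : Gamma ((n : ℝ) - r) ≠ 0 := (Gamma_pos_of_pos hs).ne'
  have hsign : (-1 : ℝ) ^ n * (-μ) ^ n = μ ^ n := by rw [← mul_pow]; ring
  have hpow : μ ^ n * (1 / μ) ^ ((n : ℝ) - r) = μ ^ r := by
    rw [one_div, inv_rpow hμ.le, ← rpow_natCast, ← rpow_neg hμ.le, ← rpow_add hμ]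
    ring_nf
  rw [integral_const_mul, integral_Ioi_rpow_sub_mul_exp_neg_mul hs hμ]
  calc (-1 : ℝ) ^ n / Gamma (n - r) *
        ((-μ) ^ n * (exp (-μ * x) * ((1 / μ) ^ ((n : ℝ) - r) * Gamma (n - r))))
      = (-1 : ℝ) ^ n * (-μ) ^ n * (1 / μ) ^ ((n : ℝ) - r) * exp (-μ * x) *
          (Gamma (n - r) / Gamma (n - r)) := by ring
    _ = μ ^ r * exp (-μ * x) := by rw [hsign, hpow, div_self hGamma, mul_one]

theorem stmt5_general (α lam r : ℝ) (hsum : 0 < lam + α) (x : ℝ) :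
    Real.exp (α * x) *
      caputoInf r (fun y => Real.exp (-α * y) * Real.exp (-lam * y)) x
      = (lam + α) ^ r * Real.exp (-lam * x) := by
  have hprod : (fun y => exp (-α * y) * exp (-lam * y)) = fun y => exp (-(lam + α) * y) := by
    funext y
    rw [← exp_add]
    ring_nf
  rw [hprod, caputoInf_exp_neg_mul hsum, mul_left_comm, ← exp_add]
  ring_nf

/-- For `λ > 0` with `λ + α > 0` and `r > 0`, the function `e^{−λx}` is an
eigenfunction of `f ↦ e^{αx} C_D_∞^r[e^{−αx} f(x)]` with eigenvalue `(λ + α)^r`. -/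
theorem stmt5 (α lam r : ℝ) (hlam : 0 < lam) (hsum : 0 < lam + α) (hr : 0 < r) (x : ℝ) :
    Real.exp (α * x) *
      caputoInf r (fun y => Real.exp (-α * y) * Real.exp (-lam * y)) x
      = (lam + α) ^ r * Real.exp (-lam * x) :=
  stmt5_general α lam r hsum x
end

section
/- For positive real numbers α, r, c and a suitable function f, the identity e^{αx} C_D_{∞,x}^r[e^{−αx} f(x+cy)] = c^{−r} e^{αcy} C_D_{∞,y}^r[e^{−αcy} f(x+cy)] holds, where the fractional derivative in the first expression is taken with respect to x and in the second with respect to y. -/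
open MeasureTheory
section AuxStmt7
open Set

lemma my_integral_comp_add_right_Ioi (g : ℝ → ℝ) (a d : ℝ) :
    (∫ s in Ioi a, g (s + d)) = ∫ t in Ioi (a + d), g t := by
  have : MeasurePreserving (fun s : ℝ => s + d) volume volume :=
    measurePreserving_add_right volume d
  rw [← (this.setIntegral_preimage_emb (measurableEmbedding_addRight d) g (Ioi (a + d)))]
  congr 1
  ext s
  simp [add_lt_add_iff_right]

lemma my_iteratedDeriv_const_mul (n : ℕ) (a : ℝ) {h : ℝ → ℝ} (hh : ContDiff ℝ (n : ℕ∞) h) (z : ℝ) :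
    iteratedDeriv n (fun t => a * h t) z = a * iteratedDeriv n h z := by
  simp only [← iteratedDerivWithin_univ]
  exact iteratedDerivWithin_const_mul (Set.mem_univ z) uniqueDiffOn_univ a hh.contDiffAt.contDiffWithinAt

lemma my_key (α r c : ℝ) (hc : 0 < c) (n : ℕ) (f : ℝ → ℝ) (hf : ContDiff ℝ (⊤ : ℕ∞) f)
    (x y K : ℝ) :
    Real.exp (α * x) * (K * ∫ t in Ioi x,
        (t - x) ^ ((n : ℝ) - r - 1) *
          iteratedDeriv n (fun t => Real.exp (-α * t) * f (t + c * y)) t)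
      = c ^ (-r) * Real.exp (α * c * y) * (K * ∫ s in Ioi y,
        (s - y) ^ ((n : ℝ) - r - 1) *
          iteratedDeriv n (fun s => Real.exp (-α * c * s) * f (x + c * s)) s) := by
  set p : ℝ := (n : ℝ) - r - 1 with hp
  set g₁ : ℝ → ℝ := fun t => Real.exp (-α * t) * f (t + c * y) with hg₁def
  set G : ℝ → ℝ := iteratedDeriv n g₁ with hGdef
  set b : ℝ := x - c * y with hb
  have hg₁ : ContDiff ℝ (⊤ : ℕ∞) g₁ :=
    ((Real.contDiff_exp.comp (contDiff_const.mul contDiff_id)).mul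
      (hf.comp (contDiff_id.add contDiff_const)))
  -- step A: rewrite the second function
  have hfun : (fun s => Real.exp (-α * c * s) * f (x + c * s))
      = fun s => Real.exp (α * b) * g₁ (c * s + b) := by
    funext s
    simp only [hg₁def]
    rw [show c * s + b + c * y = x + c * s by rw [hb]; ring, ← mul_assoc, ← Real.exp_add]
    congr 2
    ring
  -- step B: iterated derivative
  have hshift : ContDiff ℝ (⊤ : ℕ∞) (fun u => g₁ (u + b)) :=
    hg₁.comp (contDiff_id.add contDiff_const)
  have hder : ∀ s, iteratedDeriv n (fun s => Real.exp (-α * c * s) * f (x + c * s)) s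
      = Real.exp (α * b) * (c ^ n * G (c * s + b)) := by
    intro s
    rw [hfun]
    have hcd : ContDiff ℝ (n : ℕ∞) (fun s : ℝ => g₁ (c * s + b)) :=
      (hg₁.comp ((contDiff_const.mul contDiff_id).add contDiff_const)).of_le (by exact_mod_cast le_top)
    rw [my_iteratedDeriv_const_mul n (Real.exp (α * b)) (h := fun s : ℝ => g₁ (c * s + b)) hcd s]
    congr 1
    have : (fun s : ℝ => g₁ (c * s + b)) = fun s => (fun u => g₁ (u + b)) (c * s) := rfl
    rw [this, iteratedDeriv_comp_const_mul (hshift.of_le (by exact_mod_cast le_top)) c]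
    simp only [smul_eq_mul]
    rw [iteratedDeriv_comp_add_const]
  -- step C: compute the integral on the right
  have hJ : (∫ s in Ioi y, (s - y) ^ p *
        iteratedDeriv n (fun s => Real.exp (-α * c * s) * f (x + c * s)) s)
      = Real.exp (α * b) * (c ^ n * (c⁻¹ * ((c⁻¹) ^ p *
          ∫ t in Ioi x, (t - x) ^ p * G t))) := by
    have e1 : (fun s => (s - y) ^ p *
          iteratedDeriv n (fun s => Real.exp (-α * c * s) * f (x + c * s)) s)
        = fun s => Real.exp (α * b) * (c ^ n * ((s - y) ^ p * G (c * s + b))) := by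
      funext s; rw [hder s]; ring
    rw [e1, MeasureTheory.integral_const_mul, MeasureTheory.integral_const_mul]
    congr 2
    -- shift s ↦ s + y
    have e2 : (∫ s in Ioi y, (s - y) ^ p * G (c * s + b))
        = ∫ s in Ioi (0 + y), (fun s => (s - y) ^ p * G (c * s + b)) s := by
      rw [zero_add]
    rw [e2, ← my_integral_comp_add_right_Ioi (fun s => (s - y) ^ p * G (c * s + b)) 0 y]
    have e3 : (fun s : ℝ => (s + y - y) ^ p * G (c * (s + y) + b))
        = fun s : ℝ => (fun u => (c⁻¹ * u) ^ p * G (u + x)) (c * s) := by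
      funext s
      simp only [add_sub_cancel_right]
      rw [inv_mul_cancel_left₀ hc.ne']
      congr 2
      rw [hb]; ring
    show (∫ s in Ioi (0:ℝ), (s + y - y) ^ p * G (c * (s + y) + b)) = _
    rw [e3]
    rw [integral_comp_mul_left_Ioi (fun u => (c⁻¹ * u) ^ p * G (u + x)) 0 hc, mul_zero]
    have e4 : (∫ u in Ioi (0:ℝ), (c⁻¹ * u) ^ p * G (u + x))
        = ∫ u in Ioi (0:ℝ), (c⁻¹) ^ p * (u ^ p * G (u + x)) := by
      refine setIntegral_congr_fun measurableSet_Ioi fun u hu => ?_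
      rw [Real.mul_rpow (by positivity) (le_of_lt hu)]
      ring
    rw [e4, MeasureTheory.integral_const_mul, smul_eq_mul]
    congr 1
    have e5 : (∫ u in Ioi (0:ℝ), u ^ p * G (u + x))
        = ∫ u in Ioi (0:ℝ), (fun t => (t - x) ^ p * G t) (u + x) := by
      refine setIntegral_congr_fun measurableSet_Ioi fun u hu => ?_
      simp [add_sub_cancel_right]
    rw [e5, my_integral_comp_add_right_Ioi (fun t => (t - x) ^ p * G t) 0 x, zero_add]
  rw [hJ]
  -- final scalar algebra
  have hexp : Real.exp (α * c * y) * Real.exp (α * b) = Real.exp (α * x) := by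
    rw [← Real.exp_add]; congr 1; rw [hb]; ring
  have h1 : (c⁻¹) ^ p = c ^ (-p) := by
    rw [Real.inv_rpow hc.le, ← Real.rpow_neg hc.le]
  have hcpow : c ^ (-r) * ((c : ℝ) ^ n * (c⁻¹ * c ^ (-p))) = 1 := by
    rw [← Real.rpow_natCast c n, ← Real.rpow_neg_one c, ← Real.rpow_add hc,
      ← Real.rpow_add hc, ← Real.rpow_add hc,
      show -r + ((n : ℝ) + (-1 + -p)) = 0 by rw [hp]; ring, Real.rpow_zero]
  rw [h1]
  calc Real.exp (α * x) * (K * ∫ t in Ioi x, (t - x) ^ p * G t)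
      = Real.exp (α * x) * (1 * (K * ∫ t in Ioi x, (t - x) ^ p * G t)) := by ring
    _ = (Real.exp (α * c * y) * Real.exp (α * b)) *
        ((c ^ (-r) * ((c : ℝ) ^ n * (c⁻¹ * c ^ (-p)))) *
          (K * ∫ t in Ioi x, (t - x) ^ p * G t)) := by rw [hexp, hcpow]
    _ = _ := by ring


end AuxStmt7

/-- Change of variables (Lemma 3.1):
`e^{αx} C_D_{∞,x}^r[e^{−αx} f(x+cy)] = c^{−r} e^{αcy} C_D_{∞,y}^r[e^{−αcy} f(x+cy)]`. -/
theorem stmt7 (α r c : ℝ) (hα : 0 < α) (hr : 0 < r) (hc : 0 < c)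
    (f : ℝ → ℝ) (hf : ContDiff ℝ (⊤ : ℕ∞) f)
    (hdecay : ∀ n : ℕ,
      Filter.Tendsto (fun t => Real.exp (-α * t) * iteratedDeriv n f t)
        Filter.atTop (nhds 0)) (x y : ℝ) :
    Real.exp (α * x) * caputoInf r (fun t => Real.exp (-α * t) * f (t + c * y)) x
      = c ^ (-r) * Real.exp (α * c * y) *
        caputoInf r (fun s => Real.exp (-α * c * s) * f (x + c * s)) y := by
  unfold caputoInf
  exact my_key α r c hc (⌊r⌋₊ + 1) f hf x y _
end

section
/- For 0 < μ ≤ 1, λ > 0, and s > λ^{1/μ}, the Laplace transform of t ↦ λ t^{μ−1} E_{μ,μ}(−λ t^μ) equals λ/(s^μ + λ). -/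
open MeasureTheory

/-- The two-parameter Mittag-Leffler function `E_{α,β}(z) = Σ z^k / Γ(αk + β)`. -/
noncomputable def mittagLeffler (α β z : ℝ) : ℝ :=
  ∑' k : ℕ, z ^ k / Real.Gamma (α * k + β)

/-!
Expanding `E_{α,β}` termwise writes `e^{-st} t^{β-1} E_{α,β}(c t^α)` as a series of Gamma
integrands whose `k`-th integral over `(0, ∞)` is `c^k s^{-(αk+β)}`. The series of absolute
integrals is geometric with ratio `|c| s^{-α} < 1`, so integration and summation commute, and
summing the geometric series gives `s^{α-β} / (s^α - c)`. The theorem is the case `α = β = μ`,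
`c = -λ`, where `s > λ^{1/μ}` says exactly `λ < s^μ`.
-/

open Real Set

lemma integrableOn_rpow_mul_exp_neg_mul_Ioi {a r : ℝ} (ha : 0 < a) (hr : 0 < r) :
    IntegrableOn (fun t : ℝ ↦ t ^ (a - 1) * exp (-(r * t))) (Ioi 0) :=
  Integrable.of_integral_ne_zero <| by
    rw [integral_rpow_mul_exp_neg_mul_Ioi ha hr]; positivity

/-- The `k`-th term of the series expansion of `e^{-st} t^{β-1} E_{α,β}(c t^α)`. -/
noncomputable def mittagLefflerLaplaceSummand (α β c s : ℝ) (k : ℕ) (t : ℝ) : ℝ :=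
  c ^ k / Gamma (α * k + β) * (t ^ (α * k + β - 1) * exp (-(s * t)))

section LaplaceTransform

variable {α β c s : ℝ}

lemma exp_mul_rpow_mul_mittagLeffler_eq_tsum {t : ℝ} (ht : 0 < t) :
    exp (-s * t) * (t ^ (β - 1) * mittagLeffler α β (c * t ^ α))
      = ∑' k, mittagLefflerLaplaceSummand α β c s k t := by
  rw [mittagLeffler, ← tsum_mul_left, ← tsum_mul_left]
  refine tsum_congr fun k ↦ ?_
  have hpow : t ^ (β - 1) * (c * t ^ α) ^ k = c ^ k * t ^ (α * k + β - 1) := by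
    rw [mul_pow, ← rpow_natCast (t ^ α), ← rpow_mul ht.le, mul_left_comm, ← rpow_add ht]
    ring_nf
  rw [mittagLefflerLaplaceSummand, neg_mul, mul_div_assoc', hpow]
  ring

lemma integrableOn_mittagLefflerLaplaceSummand (hα : 0 ≤ α) (hβ : 0 < β) (hs : 0 < s) (k : ℕ) :
    IntegrableOn (mittagLefflerLaplaceSummand α β c s k) (Ioi 0) :=
  (integrableOn_rpow_mul_exp_neg_mul_Ioi (by positivity) hs).const_mul _

lemma integral_mittagLefflerLaplaceSummand (hα : 0 ≤ α) (hβ : 0 < β) (hs : 0 < s) (k : ℕ) :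
    ∫ t in Ioi 0, mittagLefflerLaplaceSummand α β c s k t = s ^ (-β) * (c * s ^ (-α)) ^ k := by
  have hγ : 0 < α * k + β := by positivity
  have hpow : (1 / s) ^ (α * k + β) = s ^ (-β) * (s ^ (-α)) ^ k := by
    rw [one_div, inv_rpow hs.le, ← rpow_neg hs.le, show -(α * k + β) = -α * k + -β by ring,
      rpow_add hs, rpow_mul hs.le, rpow_natCast, mul_comm]
  simp only [mittagLefflerLaplaceSummand]
  rw [integral_const_mul, integral_rpow_mul_exp_neg_mul_Ioi hγ hs, hpow]
  field_simp [(Gamma_pos_of_pos hγ).ne']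
  ring

lemma norm_mittagLefflerLaplaceSummand (hα : 0 ≤ α) (hβ : 0 < β) (k : ℕ) {t : ℝ} (ht : 0 < t) :
    ‖mittagLefflerLaplaceSummand α β c s k t‖ = mittagLefflerLaplaceSummand α β |c| s k t := by
  have hΓ : 0 < Gamma (α * k + β) := Gamma_pos_of_pos (by positivity)
  rw [mittagLefflerLaplaceSummand, mittagLefflerLaplaceSummand, norm_mul, norm_div, norm_pow,
    Real.norm_eq_abs, Real.norm_of_nonneg hΓ.le, Real.norm_of_nonneg (by positivity)]

theorem integral_exp_mul_rpow_mul_mittagLeffler (hα : 0 ≤ α) (hβ : 0 < β) (hs : 0 < s)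
    (hc : |c| < s ^ α) :
    ∫ t in Ioi 0, exp (-s * t) * (t ^ (β - 1) * mittagLeffler α β (c * t ^ α))
      = s ^ (α - β) / (s ^ α - c) := by
  have hsα : 0 < s ^ α := rpow_pos_of_pos hs α
  have hratio : |c| * s ^ (-α) < 1 := by
    rwa [rpow_neg hs.le, ← div_eq_mul_inv, div_lt_one hsα]
  have hsummable : Summable fun k ↦ ∫ t in Ioi 0, ‖mittagLefflerLaplaceSummand α β c s k t‖ := by
    have hnorm k : ∫ t in Ioi 0, ‖mittagLefflerLaplaceSummand α β c s k t‖
        = s ^ (-β) * (|c| * s ^ (-α)) ^ k := by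
      rw [← integral_mittagLefflerLaplaceSummand hα hβ hs k]
      exact setIntegral_congr_fun measurableSet_Ioi fun t ht ↦
        norm_mittagLefflerLaplaceSummand hα hβ k ht
    simp_rw [hnorm]
    exact (summable_geometric_of_lt_one (by positivity) hratio).mul_left _
  have hgeom : |c * s ^ (-α)| < 1 := by rwa [abs_mul, abs_of_pos (rpow_pos_of_pos hs _)]
  calc ∫ t in Ioi 0, exp (-s * t) * (t ^ (β - 1) * mittagLeffler α β (c * t ^ α))
      = ∫ t in Ioi 0, ∑' k, mittagLefflerLaplaceSummand α β c s k t :=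
        setIntegral_congr_fun measurableSet_Ioi fun t ht ↦
          exp_mul_rpow_mul_mittagLeffler_eq_tsum ht
    _ = ∑' k, ∫ t in Ioi 0, mittagLefflerLaplaceSummand α β c s k t :=
        (integral_tsum_of_summable_integral_norm
          (integrableOn_mittagLefflerLaplaceSummand hα hβ hs) hsummable).symm
    _ = s ^ (-β) * (1 - c * s ^ (-α))⁻¹ := by
        simp_rw [integral_mittagLefflerLaplaceSummand hα hβ hs]
        rw [tsum_mul_left, tsum_geometric_of_abs_lt_one hgeom]
    _ = s ^ (α - β) / (s ^ α - c) := by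
        have hsc : s ^ α - c ≠ 0 := by linarith [le_abs_self c]
        rw [rpow_neg hs.le α, rpow_neg hs.le β, rpow_sub hs]
        field_simp

end LaplaceTransform

theorem stmt9_general (mu lam s : ℝ) (hmu0 : 0 < mu) (hlam : 0 < lam)
    (hs : lam ^ (1 / mu) < s) :
    ∫ t in Set.Ioi (0 : ℝ),
        Real.exp (-s * t) * (lam * t ^ (mu - 1) * mittagLeffler mu mu (-lam * t ^ mu))
      = lam / (s ^ mu + lam) := by
  have hs0 : 0 < s := (rpow_pos_of_pos hlam _).trans hs
  have hlam_lt : lam < s ^ mu := by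
    simpa [← rpow_mul hlam.le, hmu0.ne'] using rpow_lt_rpow (by positivity) hs hmu0
  have hlaplace := integral_exp_mul_rpow_mul_mittagLeffler (c := -lam) hmu0.le hmu0 hs0
    (by rwa [abs_neg, abs_of_pos hlam])
  calc ∫ t in Ioi 0, exp (-s * t) * (lam * t ^ (mu - 1) * mittagLeffler mu mu (-lam * t ^ mu))
      = lam * ∫ t in Ioi 0,
          exp (-s * t) * (t ^ (mu - 1) * mittagLeffler mu mu (-lam * t ^ mu)) := by
        rw [← integral_const_mul]
        congr 1 with t
        ring
    _ = lam / (s ^ mu + lam) := by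
        rw [hlaplace, sub_self, rpow_zero, sub_neg_eq_add, mul_one_div]

/-- For `0 < μ ≤ 1`, `λ > 0`, and `s > λ^{1/μ}`, the Laplace transform of
`t ↦ λ t^{μ−1} E_{μ,μ}(−λ t^μ)` equals `λ/(s^μ + λ)`. -/
theorem stmt9 (mu lam s : ℝ) (hmu0 : 0 < mu) (hmu1 : mu ≤ 1) (hlam : 0 < lam)
    (hs : lam ^ (1 / mu) < s) :
    ∫ t in Set.Ioi (0 : ℝ),
        Real.exp (-s * t) * (lam * t ^ (mu - 1) * mittagLeffler mu mu (-lam * t ^ mu))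
      = lam / (s ^ mu + lam) :=
  stmt9_general mu lam s hmu0 hlam hs
end

section
/- For 0 < μ ≤ 1, λ > 0, s > λ^{1/μ}, and every nonnegative integer k, the Laplace transform of t ↦ t^{μk + μ − 1} E_{μ,μ}^{(k)}(−λ t^μ) equals k! s^{0}/(s^μ + λ)^{k+1}, i.e., ∫_0^∞ e^{−st} t^{μk+μ−1} E_{μ,μ}^{(k)}(−λ t^μ) dt = k!/(s^μ + λ)^{k+1}. -/
open MeasureTheory

/-- The two-parameter Mittag-Leffler function as a function of `z`. -/
noncomputable def mittagLefflerFun (α β : ℝ) : ℝ → ℝ :=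
  fun z => ∑' j : ℕ, z ^ j / Real.Gamma (α * j + β)

/-!
Log-convexity of `Γ` gives `Γ x / Γ (x + α) ≤ (x - 1) ^ (-α) → 0`, so by the ratio test the series
`E_{α,β}(z) = ∑ zⁿ / Γ(αn + β)` and all its termwise derivatives converge on all of `ℝ`, and
`E_{α,β}^{(k)}(z) = ∑ (n + k)!/n! · zⁿ / Γ(α(n + k) + β)`. Substituting `z = w t^α` and integrating
termwise against `e^{-st} t^{αk+β-1}`, each Gamma factor is cancelled by
`∫₀^∞ t^{a-1} e^{-st} dt = Γ(a) / s^a`, leaving the binomial series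
`s^{-αk-β} ∑ (n + k)!/n! (w / s^α)ⁿ = k! s^{-αk-β} / (1 - w / s^α)^{k+1}`.
For `|w| < s^α` the same computation with `|w|` bounds the series of absolute values, which
justifies the exchange of sum and integral.
-/

open Real Filter Set Topology

theorem Real.Gamma_mul_rpow_le_Gamma_add {x a : ℝ} (hx : 1 < x) (ha : 0 < a) :
    Gamma x * (x - 1) ^ a ≤ Gamma (x + a) := by
  have hx₁ : 0 < x - 1 := by linarith
  have hslope := convexOn_log_Gamma.slope_mono_adjacent (mem_Ioi.2 hx₁)
    (mem_Ioi.2 (by linarith : 0 < x + a)) (sub_one_lt x) (lt_add_of_pos_right x ha)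
  -- the slope of `log ∘ Γ` on `[x - 1, x]` is `log (x - 1)`
  have hrec : log (x - 1) = log (Gamma x) - log (Gamma (x - 1)) := by
    rw [eq_sub_iff_add_eq, ← log_mul hx₁.ne' (Gamma_pos_of_pos hx₁).ne', ← Gamma_add_one hx₁.ne',
      sub_add_cancel]
  simp only [Function.comp_apply, sub_sub_cancel, div_one, add_sub_cancel_left, ← hrec,
    le_div_iff₀ ha] at hslope
  rw [← log_le_log_iff (by positivity) (Gamma_pos_of_pos (by linarith)),
    log_mul (Gamma_pos_of_pos (by linarith)).ne' (by positivity), log_rpow hx₁]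
  linarith

theorem Real.tendsto_Gamma_div_Gamma_add_atTop {a : ℝ} (ha : 0 < a) :
    Tendsto (fun x => Gamma x / Gamma (x + a)) atTop (𝓝 0) := by
  have hdecay : Tendsto (fun x : ℝ => (x - 1) ^ (-a)) atTop (𝓝 0) :=
    (tendsto_rpow_neg_atTop ha).comp (tendsto_atTop_add_const_right _ (-1) tendsto_id)
  refine squeeze_zero' ?_ ?_ hdecay
  all_goals filter_upwards [eventually_gt_atTop 1] with x hx
  · exact div_nonneg (Gamma_pos_of_pos (by linarith)).le (Gamma_pos_of_pos (by linarith)).le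
  · rw [div_le_iff₀ (Gamma_pos_of_pos (by linarith)), rpow_neg (by linarith), ← div_eq_inv_mul,
      le_div_iff₀ (rpow_pos_of_pos (by linarith) a)]
    exact Gamma_mul_rpow_le_Gamma_add hx ha

theorem Nat.add_one_mul_descFactorial_add_one_add (n k : ℕ) :
    (n + 1) * (n + 1 + k).descFactorial k = (n + k + 1).descFactorial (k + 1) := by
  rw [Nat.descFactorial_succ, show n + k + 1 - k = n + 1 by omega, Nat.add_right_comm]

theorem tendsto_add_one_descFactorial_ratio (k : ℕ) :
    Tendsto (fun n : ℕ => ((n + 1 + k).descFactorial k : ℝ) / (n + k).descFactorial k) atTop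
      (𝓝 1) := by
  have hshift := ((tendsto_const_div_atTop_nhds_zero_nat (k : ℝ)).comp
    (tendsto_add_atTop_nat 1)).const_add 1
  rw [add_zero] at hshift
  refine hshift.congr fun n => ?_
  have hD : (0 : ℝ) < (n + k).descFactorial k := mod_cast Nat.descFactorial_pos.2 (by omega)
  have hrec : ((n + 1 : ℕ) : ℝ) * (n + 1 + k).descFactorial k
      = (n + k + 1) * (n + k).descFactorial k :=
    mod_cast (Nat.add_one_mul_descFactorial_add_one_add n k).trans
      (Nat.succ_descFactorial_succ (n + k) k)
  simp only [Function.comp_apply]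
  push_cast at hrec ⊢
  field_simp
  linarith

section EntireSeries

variable {a : ℕ → ℝ}

theorem summable_descFactorial_mul_mul_pow (hpos : ∀ n, 0 < a n)
    (hratio : Tendsto (fun n => a (n + 1) / a n) atTop (𝓝 0)) (k : ℕ) (r : ℝ) :
    Summable fun n => ((n + k).descFactorial k : ℝ) * a (n + k) * r ^ n := by
  have hD : ∀ n, (0 : ℝ) < (n + k).descFactorial k := fun n => by
    exact_mod_cast Nat.descFactorial_pos.2 (by omega)
  set R := |r| + 1
  have hR : 0 < R := by positivity
  have hratio' : Tendsto (fun n => ‖((n + 1 + k).descFactorial k : ℝ) * a (n + 1 + k) * R ^ (n + 1)‖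
      / ‖((n + k).descFactorial k : ℝ) * a (n + k) * R ^ n‖) atTop (𝓝 0) := by
    have h := ((tendsto_add_one_descFactorial_ratio k).mul
      (hratio.comp (tendsto_add_atTop_nat k))).mul_const R
    rw [mul_zero, zero_mul] at h
    refine h.congr fun n => ?_
    simp only [Function.comp_apply, norm_mul, norm_pow, Real.norm_natCast,
      Real.norm_of_nonneg (hpos _).le, Real.norm_of_nonneg hR.le, Nat.add_right_comm n 1 k]
    field_simp [(hD n).ne', (hpos (n + k)).ne']
    ring
  have hsumR : Summable fun n => ((n + k).descFactorial k : ℝ) * a (n + k) * R ^ n :=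
    summable_of_ratio_test_tendsto_lt_one zero_lt_one
      (Eventually.of_forall fun n => (mul_pos (mul_pos (hD n) (hpos _)) (pow_pos hR n)).ne') hratio'
  refine Summable.of_norm_bounded hsumR fun n => ?_
  simp only [norm_mul, norm_pow, Real.norm_natCast, Real.norm_of_nonneg (hpos _).le]
  gcongr
  · exact mul_nonneg (hD n).le (hpos _).le
  · simp [R]

theorem hasDerivAt_tsum_descFactorial_mul_mul_pow (hpos : ∀ n, 0 < a n)
    (hratio : Tendsto (fun n => a (n + 1) / a n) atTop (𝓝 0)) (k : ℕ) (x : ℝ) :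
    HasDerivAt (fun z => ∑' n, ((n + k).descFactorial k : ℝ) * a (n + k) * z ^ n)
      (∑' n, ((n + (k + 1)).descFactorial (k + 1) : ℝ) * a (n + (k + 1)) * x ^ n) x := by
  set b : ℕ → ℝ := fun n => ((n + k).descFactorial k : ℝ) * a (n + k)
  have hb : ∀ n, 0 ≤ b n := fun n => mul_nonneg (Nat.cast_nonneg _) (hpos _).le
  have hshift : ∀ n (y : ℝ), b (n + 1) * ((n + 1 : ℕ) * y ^ n)
      = ((n + (k + 1)).descFactorial (k + 1) : ℝ) * a (n + (k + 1)) * y ^ n := fun n y => by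
    rw [show n + (k + 1) = n + k + 1 by omega, ← Nat.add_one_mul_descFactorial_add_one_add,
      show n + k + 1 = n + 1 + k by omega]
    push_cast
    ring
  set R := |x| + 1
  have hxR : x ∈ Metric.ball (0 : ℝ) R := by simp [R]
  have hu : Summable fun n => b n * (n * R ^ (n - 1)) := by
    rw [← summable_nat_add_iff 1]
    refine (summable_descFactorial_mul_mul_pow hpos hratio (k + 1) R).congr fun n => ?_
    rw [← hshift, Nat.add_sub_cancel]
  have hderiv := hasDerivAt_tsum_of_isPreconnected (g := fun n z => b n * z ^ n)
    (g' := fun n z => b n * (n * z ^ (n - 1))) hu Metric.isOpen_ball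
    (convex_ball _ _).isPreconnected (fun n y _ => (hasDerivAt_pow n y).const_mul (b n))
    (fun n y hy => ?_) hxR (summable_descFactorial_mul_mul_pow hpos hratio k x) hxR
  · rw [tsum_eq_zero_add'] at hderiv
    · simpa only [CharP.cast_eq_zero, zero_mul, mul_zero, zero_add, Nat.add_sub_cancel, hshift]
        using hderiv
    · simpa only [Nat.add_sub_cancel, hshift]
        using summable_descFactorial_mul_mul_pow hpos hratio (k + 1) x
  · rw [mem_ball_zero_iff, Real.norm_eq_abs] at hy
    change ‖b n * (n * y ^ (n - 1))‖ ≤ _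
    rw [norm_mul, Real.norm_of_nonneg (hb n), norm_mul, norm_pow, Real.norm_natCast]
    gcongr
    · exact hb n
    · exact hy.le

theorem iteratedDeriv_tsum_mul_pow (hpos : ∀ n, 0 < a n)
    (hratio : Tendsto (fun n => a (n + 1) / a n) atTop (𝓝 0)) (k : ℕ) (x : ℝ) :
    iteratedDeriv k (fun z => ∑' n, a n * z ^ n) x
      = ∑' n, ((n + k).descFactorial k : ℝ) * a (n + k) * x ^ n := by
  induction k generalizing x with
  | zero => simp
  | succ k ih =>
    rw [iteratedDeriv_succ, funext ih]
    exact (hasDerivAt_tsum_descFactorial_mul_mul_pow hpos hratio k x).deriv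

end EntireSeries

theorem tendsto_inv_Gamma_mul_add_ratio {α β : ℝ} (hα : 0 < α) :
    Tendsto (fun n : ℕ => (Gamma (α * ↑(n + 1) + β))⁻¹ / (Gamma (α * n + β))⁻¹) atTop (𝓝 0) := by
  have hlin : Tendsto (fun n : ℕ => α * n + β) atTop atTop :=
    tendsto_atTop_add_const_right _ β (tendsto_natCast_atTop_atTop.const_mul_atTop hα)
  refine ((tendsto_Gamma_div_Gamma_add_atTop hα).comp hlin).congr fun n => ?_
  rw [Function.comp_apply, inv_div_inv]
  push_cast
  ring_nf

theorem iteratedDeriv_mittagLefflerFun {α β : ℝ} (hα : 0 < α) (hβ : 0 < β) (k : ℕ) (x : ℝ) :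
    iteratedDeriv k (mittagLefflerFun α β) x
      = ∑' n, ((n + k).descFactorial k : ℝ) * (Gamma (α * ↑(n + k) + β))⁻¹ * x ^ n := by
  have hseries : mittagLefflerFun α β = fun z => ∑' n : ℕ, (Gamma (α * n + β))⁻¹ * z ^ n := by
    ext z
    simp only [mittagLefflerFun, div_eq_inv_mul]
  rw [hseries]
  exact iteratedDeriv_tsum_mul_pow (a := fun n => (Gamma (α * n + β))⁻¹)
    (fun n => inv_pos.2 (Gamma_pos_of_pos (by positivity))) (tendsto_inv_Gamma_mul_add_ratio hα) k x

theorem integral_Ioi_tsum_mul_rpow_mul_exp_neg_mul {b e : ℕ → ℝ} (he : ∀ m, 0 < e m) {s : ℝ}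
    (hs : 0 < s) (hsum : Summable fun m => |b m| * ((1 / s) ^ e m * Gamma (e m))) :
    ∫ t in Ioi 0, ∑' m, b m * (t ^ (e m - 1) * exp (-(s * t)))
      = ∑' m, b m * ((1 / s) ^ e m * Gamma (e m)) := by
  have hint : ∀ m, IntegrableOn (fun t => t ^ (e m - 1) * exp (-(s * t))) (Ioi 0) := fun m =>
    Integrable.of_integral_ne_zero <| by
      rw [integral_rpow_mul_exp_neg_mul_Ioi (he m) hs]
      exact (mul_pos (rpow_pos_of_pos (by positivity) _) (Gamma_pos_of_pos (he m))).ne'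
  have hnorm : ∀ m, ∫ t in Ioi 0, ‖b m * (t ^ (e m - 1) * exp (-(s * t)))‖
      = |b m| * ((1 / s) ^ e m * Gamma (e m)) := fun m => by
    rw [← integral_rpow_mul_exp_neg_mul_Ioi (he m) hs, ← integral_const_mul]
    refine setIntegral_congr_fun measurableSet_Ioi fun t (ht : 0 < t) => ?_
    rw [norm_mul, Real.norm_eq_abs, Real.norm_of_nonneg (by positivity)]
  rw [← integral_tsum_of_summable_integral_norm (fun m => (hint m).const_mul (b m))
    (by simpa only [hnorm] using hsum)]
  simp only [integral_const_mul, integral_rpow_mul_exp_neg_mul_Ioi (he _) hs]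

theorem hasSum_descFactorial_mul_geometric_of_norm_lt_one (k : ℕ) {r : ℝ} (hr : ‖r‖ < 1) :
    HasSum (fun n => ((n + k).descFactorial k : ℝ) * r ^ n) (k.factorial / (1 - r) ^ (k + 1)) := by
  have h := (hasSum_choose_mul_geometric_of_norm_lt_one k hr).mul_left (k.factorial : ℝ)
  simpa only [mul_one_div, ← mul_assoc, ← Nat.cast_mul, ← Nat.descFactorial_eq_factorial_mul_choose]
    using h

theorem exp_mul_rpow_mul_iteratedDeriv_mittagLefflerFun_eq_tsum {α β : ℝ} (hα : 0 < α)
    (hβ : 0 < β) (s w : ℝ) (k : ℕ) {t : ℝ} (ht : 0 < t) :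
    exp (-s * t) * t ^ (α * k + β - 1) * iteratedDeriv k (mittagLefflerFun α β) (w * t ^ α)
      = ∑' n, ((n + k).descFactorial k : ℝ) * (Gamma (α * ↑(n + k) + β))⁻¹ * w ^ n
          * (t ^ (α * ↑(n + k) + β - 1) * exp (-(s * t))) := by
  rw [iteratedDeriv_mittagLefflerFun hα hβ, ← tsum_mul_left]
  refine tsum_congr fun n => ?_
  have hpow : t ^ (α * k + β - 1) * (t ^ α) ^ n = t ^ (α * ↑(n + k) + β - 1) := by
    rw [← rpow_natCast, ← rpow_mul ht.le, ← rpow_add ht]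
    push_cast
    ring_nf
  rw [← hpow, neg_mul, mul_pow]
  ring

theorem integral_exp_mul_rpow_mul_iteratedDeriv_mittagLefflerFun {α β s w : ℝ} (hα : 0 < α)
    (hβ : 0 < β) (hs : 0 < s) (hw : |w| < s ^ α) (k : ℕ) :
    ∫ t in Ioi 0, exp (-s * t) * t ^ (α * k + β - 1) *
        iteratedDeriv k (mittagLefflerFun α β) (w * t ^ α)
      = k.factorial * s ^ (α - β) / (s ^ α - w) ^ (k + 1) := by
  set e : ℕ → ℝ := fun n => α * ↑(n + k) + β
  have he : ∀ n, 0 < e n := fun n => by positivity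
  have hsα : 0 < s ^ α := by positivity
  have hterm : ∀ (v : ℝ) (n : ℕ),
      ((n + k).descFactorial k : ℝ) * (Gamma (e n))⁻¹ * v ^ n * ((1 / s) ^ e n * Gamma (e n))
        = ((n + k).descFactorial k : ℝ) * (v / s ^ α) ^ n * ((s ^ α) ^ k * s ^ β)⁻¹ :=
    fun v n => by
      rw [one_div, inv_rpow hs.le, rpow_add hs, rpow_mul hs.le, rpow_natCast, pow_add, div_pow]
      field_simp [(Gamma_pos_of_pos (he n)).ne']
  have hratio : ‖w / s ^ α‖ < 1 := by
    rwa [norm_div, Real.norm_of_nonneg hsα.le, div_lt_one hsα, Real.norm_eq_abs]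
  have habs : Summable fun n => |((n + k).descFactorial k : ℝ) * (Gamma (e n))⁻¹ * w ^ n|
      * ((1 / s) ^ e n * Gamma (e n)) := by
    refine ((hasSum_descFactorial_mul_geometric_of_norm_lt_one k (r := |w| / s ^ α) ?_
      ).summable.mul_right ((s ^ α) ^ k * s ^ β)⁻¹).congr fun n => ?_
    · simpa [abs_div, abs_of_pos hsα] using hratio
    · rw [← hterm, abs_mul, abs_mul, abs_pow, Nat.abs_cast,
        abs_of_pos (inv_pos.2 (Gamma_pos_of_pos (he n)))]
  rw [setIntegral_congr_fun measurableSet_Ioi fun t ht =>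
      exp_mul_rpow_mul_iteratedDeriv_mittagLefflerFun_eq_tsum hα hβ s w k ht,
    integral_Ioi_tsum_mul_rpow_mul_exp_neg_mul he hs habs, tsum_congr (hterm w),
    ((hasSum_descFactorial_mul_geometric_of_norm_lt_one k hratio).mul_right _).tsum_eq,
    one_sub_div hsα.ne', div_pow, rpow_sub hs]
  have hsw : 0 < s ^ α - w := by linarith [le_abs_self w]
  field_simp
  ring

theorem stmt10_general (mu lam s : ℝ) (k : ℕ) (hmu0 : 0 < mu)
    (hlam : 0 < lam) (hs : lam ^ (1 / mu) < s) :
    ∫ t in Set.Ioi (0 : ℝ),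
        Real.exp (-s * t) * t ^ (mu * k + mu - 1) *
          iteratedDeriv k (mittagLefflerFun mu mu) (-lam * t ^ mu)
      = (k.factorial : ℝ) / (s ^ mu + lam) ^ (k + 1) := by
  have hs0 : 0 < s := (rpow_pos_of_pos hlam _).trans hs
  have hlam_lt : |-lam| < s ^ mu := by
    rwa [abs_neg, abs_of_pos hlam, ← rpow_inv_lt_iff_of_pos hlam.le hs0.le hmu0, ← one_div]
  rw [integral_exp_mul_rpow_mul_iteratedDeriv_mittagLefflerFun hmu0 hmu0 hs0 hlam_lt, sub_self,
    rpow_zero, mul_one, sub_neg_eq_add]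

/-- For `0 < μ ≤ 1`, `λ > 0`, `s > λ^{1/μ}`, and `k : ℕ`,
`∫_0^∞ e^{−st} t^{μk+μ−1} E_{μ,μ}^{(k)}(−λ t^μ) dt = k!/(s^μ + λ)^{k+1}`. -/
theorem stmt10 (mu lam s : ℝ) (k : ℕ) (hmu0 : 0 < mu) (hmu1 : mu ≤ 1)
    (hlam : 0 < lam) (hs : lam ^ (1 / mu) < s) :
    ∫ t in Set.Ioi (0 : ℝ),
        Real.exp (-s * t) * t ^ (mu * k + mu - 1) *
          iteratedDeriv k (mittagLefflerFun mu mu) (-lam * t ^ mu)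
      = (k.factorial : ℝ) / (s ^ mu + lam) ^ (k + 1) :=
  stmt10_general mu lam s k hmu0 hlam hs
end

section
/- Let λ, α, c, r > 0 with the condition r/λ > 1/(cα) (net profit condition for the gamma-time risk model with Exp(α) claims). Then the equation c^r x^r (x − (λ/c + α)) + α λ^r = 0 has exactly one real root x₂ strictly greater than λ/c, and moreover λ/c < x₂ < λ/c + α. -/
/-!
Write `b = λ/c` and `L = b + α`. Since `c^r b^r = λ^r`, the characteristic function equals
`c^r (h x - h b)` with `h x = x^r (x - L)`, so its roots are the points where `h` returns to the
level `h b < 0`. On `x > 0`, `h' x = x^(r-1) ((r+1) x - r L)`, so `h` decreases up to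
`x₀ = r L / (r+1)` and increases afterwards. The net profit condition says exactly `b < x₀`;
hence the level `h b` is reached once more, between `x₀` and `L`, where `h` vanishes.
-/

open Set

theorem existsUnique_gt_apply_eq_of_strictAntiOn_of_strictMonoOn {f : ℝ → ℝ} {a m M : ℝ}
    (ham : a < m) (hmM : m ≤ M) (hanti : StrictAntiOn f (Icc a m))
    (hmono : StrictMonoOn f (Ici m)) (hcont : ContinuousOn f (Icc m M)) (hM : f a < f M) :
    (∃! x, a < x ∧ f x = f a) ∧ ∀ x, a < x → f x = f a → x < M := by
  have gt_of_root : ∀ x, a < x → f x = f a → m < x := by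
    intro x hax hx
    by_contra! hxm
    exact (hanti (left_mem_Icc.mpr ham.le) ⟨hax.le, hxm⟩ hax).ne hx
  have lt_of_root : ∀ x, a < x → f x = f a → x < M := by
    intro x hax hx
    by_contra! hMx
    have := hmono.monotoneOn (mem_Ici.mpr hmM) (mem_Ici.mpr (hmM.trans hMx)) hMx
    linarith
  have hfm : f m < f a := hanti (left_mem_Icc.mpr ham.le) (right_mem_Icc.mpr ham.le) ham
  obtain ⟨x, hxI, hx⟩ := intermediate_value_Icc hmM hcont ⟨hfm.le, hM.le⟩
  refine ⟨⟨x, ⟨ham.trans_le hxI.1, hx⟩, fun y ⟨hay, hy⟩ => ?_⟩, lt_of_root⟩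
  exact hmono.injOn (mem_Ici.mpr (gt_of_root y hay hy).le) (mem_Ici.mpr hxI.1) (hy.trans hx.symm)

section RpowMulSub

variable {r L : ℝ}

theorem hasDerivAt_rpow_mul_sub {x : ℝ} (hx : 0 < x) :
    HasDerivAt (fun y : ℝ => y ^ r * (y - L)) (x ^ (r - 1) * ((r + 1) * x - r * L)) x := by
  have hprod := (Real.hasDerivAt_rpow_const (p := r) (Or.inl hx.ne')).mul
    ((hasDerivAt_id' x).sub_const L)
  refine hprod.congr_deriv ?_
  rw [Real.rpow_sub_one hx.ne']
  field_simp
  ring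

theorem continuousOn_rpow_mul_sub : ContinuousOn (fun y : ℝ => y ^ r * (y - L)) (Ioi 0) :=
  fun _ hx => (hasDerivAt_rpow_mul_sub (L := L) hx).continuousAt.continuousWithinAt

theorem strictAntiOn_rpow_mul_sub (hr : 0 < r) :
    StrictAntiOn (fun y : ℝ => y ^ r * (y - L)) (Ioc 0 (r * L / (r + 1))) := by
  refine strictAntiOn_of_deriv_neg (convex_Ioc _ _)
    (continuousOn_rpow_mul_sub.mono Ioc_subset_Ioi_self) fun x hx => ?_
  rw [interior_Ioc] at hx
  rw [(hasDerivAt_rpow_mul_sub hx.1).deriv]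
  have hlt : (r + 1) * x < r * L := (lt_div_iff₀' (by linarith)).mp hx.2
  exact mul_neg_of_pos_of_neg (Real.rpow_pos_of_pos hx.1 _) (by linarith)

theorem strictMonoOn_rpow_mul_sub (hr : 0 < r) (hL : 0 < L) :
    StrictMonoOn (fun y : ℝ => y ^ r * (y - L)) (Ici (r * L / (r + 1))) := by
  have hx₀ : 0 < r * L / (r + 1) := by positivity
  refine strictMonoOn_of_deriv_pos (convex_Ici _)
    (continuousOn_rpow_mul_sub.mono fun x hx => hx₀.trans_le hx) fun x hx => ?_
  rw [interior_Ici] at hx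
  have hxpos : 0 < x := hx₀.trans hx
  rw [(hasDerivAt_rpow_mul_sub hxpos).deriv]
  have hlt : r * L < (r + 1) * x := (div_lt_iff₀' (by linarith)).mp hx
  exact mul_pos (Real.rpow_pos_of_pos hxpos _) (by linarith)

end RpowMulSub

/-- Gamma-time risk model with Exp(α) claims: under the net profit condition
`r/λ > 1/(cα)`, the characteristic equation `c^r x^r (x − (λ/c + α)) + αλ^r = 0`
has exactly one real root `x₂ > λ/c`, and it satisfies `λ/c < x₂ < λ/c + α`. -/
theorem stmt12 (lam α c r : ℝ) (hlam : 0 < lam) (hα : 0 < α) (hc : 0 < c)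
    (hr : 0 < r) (hnet : r / lam > 1 / (c * α)) :
    (∃! x : ℝ, lam / c < x ∧ c ^ r * x ^ r * (x - (lam / c + α)) + α * lam ^ r = 0) ∧
    (∀ x : ℝ, lam / c < x →
      c ^ r * x ^ r * (x - (lam / c + α)) + α * lam ^ r = 0 → x < lam / c + α) := by
  have hb : 0 < lam / c := div_pos hlam hc
  have hcb : c ^ r * (lam / c) ^ r = lam ^ r := by
    rw [← Real.mul_rpow hc.le hb.le, mul_div_cancel₀ _ hc.ne']
  have hroot : ∀ x : ℝ, c ^ r * x ^ r * (x - (lam / c + α)) + α * lam ^ r = 0 ↔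
      x ^ r * (x - (lam / c + α)) = (lam / c) ^ r * (lam / c - (lam / c + α)) := by
    intro x
    have hfactor : c ^ r * x ^ r * (x - (lam / c + α)) + α * lam ^ r =
        c ^ r * (x ^ r * (x - (lam / c + α)) - (lam / c) ^ r * (lam / c - (lam / c + α))) := by
      linear_combination (-α) * hcb
    rw [hfactor, mul_eq_zero, or_iff_right (Real.rpow_pos_of_pos hc r).ne', sub_eq_zero]
  have hbx₀ : lam / c < r * (lam / c + α) / (r + 1) := by
    have hnet' : lam / c < r * α := by
      rw [div_lt_iff₀ hc]
      linarith [(div_lt_div_iff₀ (mul_pos hc hα) hlam).mp hnet]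
    rw [lt_div_iff₀ (by linarith)]
    linarith
  have hx₀L : r * (lam / c + α) / (r + 1) ≤ lam / c + α := by
    rw [div_le_iff₀ (by linarith)]
    nlinarith
  simp_rw [hroot]
  refine existsUnique_gt_apply_eq_of_strictAntiOn_of_strictMonoOn (f := fun y => y ^ r * (y - _))
    hbx₀ hx₀L ((strictAntiOn_rpow_mul_sub hr).mono fun x hx => ⟨hb.trans_le hx.1, hx.2⟩)
    (strictMonoOn_rpow_mul_sub hr (by positivity))
    (continuousOn_rpow_mul_sub.mono fun x hx => (hb.trans hbx₀).trans_le hx.1) ?_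
  simp only [sub_self, mul_zero, sub_add_cancel_left]
  nlinarith [Real.rpow_pos_of_pos hb r]
end

section
/- Let λ₂ > 0 and let F_X be the distribution function of an Exp(α) random variable. Then the unique bounded solution ψ₀ : [0,∞) → ℝ with lim_{u→∞} ψ₀(u) = 0 of the integral equation (1 + λ₂)ψ₀(u) = λ₂ ∫_0^u ψ₀(u−y) α e^{−αy} dy + λ₂ e^{−αu} is ψ₀(u) = (λ₂/(1+λ₂)) e^{−αu/(1+λ₂)}. In particular ψ₀(0) = λ₂/(λ₂+1). -/
open MeasureTheory intervalIntegral Filter Real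

/-!
The candidate `K e^{-bu}` turns the convolution with the `Exp(α)` density into
`(Kα/(α-b)) (e^{-bu} - e^{-αu})`, and matching coefficients forces `b = α/(1+λ₂)`,
`K = λ₂/(1+λ₂)`. Uniqueness is a maximum-principle argument: the difference `φ` of two
continuous solutions satisfies `(1+λ₂) φ(u) = λ₂ ∫₀ᵘ φ(u-y) k(y) dy` with a kernel of mass
at most `1`, so at a maximiser `x₀` of `|φ|` on `[0, u₀]` we get `(1+λ₂)|φ x₀| ≤ λ₂ |φ x₀|`.
-/

theorem integral_exp_mul_of_ne_zero {c : ℝ} (hc : c ≠ 0) (a b : ℝ) :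
    ∫ y in a..b, exp (c * y) = (exp (c * b) - exp (c * a)) / c := by
  rw [integral_comp_mul_left (fun x => exp x) hc, integral_exp, smul_eq_mul, inv_mul_eq_div]

theorem integral_exp_density (α u : ℝ) :
    ∫ y in (0:ℝ)..u, α * exp (-α * y) = 1 - exp (-α * u) := by
  rcases eq_or_ne α 0 with rfl | hα
  · simp
  rw [intervalIntegral.integral_const_mul, integral_exp_mul_of_ne_zero (neg_ne_zero.2 hα)]
  field_simp
  simp

theorem integral_exp_mul_exp_density {α b : ℝ} (hb : b ≠ α) (K u : ℝ) :
    ∫ y in (0:ℝ)..u, K * exp (-b * (u - y)) * (α * exp (-α * y))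
      = K * α / (α - b) * (exp (-b * u) - exp (-α * u)) := by
  have hsplit : ∀ y, K * exp (-b * (u - y)) * (α * exp (-α * y))
      = K * α * exp (-b * u) * exp ((b - α) * y) := by
    intro y
    rw [mul_assoc (K * α), ← exp_add, mul_mul_mul_comm, mul_comm (exp _), ← exp_add]
    ring_nf
  have hexp : exp (-b * u) * exp ((b - α) * u) = exp (-α * u) := by
    rw [← exp_add]; ring_nf
  simp_rw [hsplit, intervalIntegral.integral_const_mul,
    integral_exp_mul_of_ne_zero (sub_ne_zero.2 hb)]
  rw [mul_zero, exp_zero, ← hexp]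
  have hba : b - α ≠ 0 := sub_ne_zero.2 hb
  have hab : α - b ≠ 0 := sub_ne_zero.2 hb.symm
  field_simp
  ring

theorem abs_integral_mul_comp_sub_le {k φ : ℝ → ℝ} {x S : ℝ} (hx : 0 ≤ x)
    (hk : IntervalIntegrable k volume 0 x) (hk_nonneg : ∀ y ∈ Set.Icc 0 x, 0 ≤ k y)
    (hφ : ∀ y ∈ Set.Icc 0 x, |φ y| ≤ S) :
    |∫ y in (0:ℝ)..x, φ (x - y) * k y| ≤ S * ∫ y in (0:ℝ)..x, k y := by
  rw [← intervalIntegral.integral_const_mul, ← Real.norm_eq_abs]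
  refine norm_integral_le_of_norm_le hx (ae_of_all _ fun y hy => ?_) (hk.const_mul S)
  have hy' : y ∈ Set.Icc 0 x := Set.Ioc_subset_Icc_self hy
  rw [Real.norm_eq_abs, abs_mul, abs_of_nonneg (hk_nonneg y hy')]
  exact mul_le_mul_of_nonneg_right (hφ _ ⟨by linarith [hy'.2], by linarith [hy'.1]⟩)
    (hk_nonneg y hy')

section Volterra

variable {k : ℝ → ℝ} {c lam : ℝ}

theorem volterra_conv_eq_zero {φ : ℝ → ℝ} (hφ : Continuous φ) (hk : Continuous k)
    (hk_nonneg : ∀ y, 0 ≤ y → 0 ≤ k y) (hk_mass : ∀ u, 0 ≤ u → ∫ y in (0:ℝ)..u, k y ≤ 1)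
    (hlam : 0 ≤ lam) (hc : lam < c)
    (heq : ∀ u ≥ (0:ℝ), c * φ u = lam * ∫ y in (0:ℝ)..u, φ (u - y) * k y) :
    ∀ u ≥ (0:ℝ), φ u = 0 := by
  intro u₀ hu₀
  obtain ⟨x₀, hx₀, hmax⟩ := isCompact_Icc.exists_isMaxOn (Set.nonempty_Icc.2 hu₀)
    hφ.abs.continuousOn
  set S := |φ x₀|
  have hbound : ∀ y ∈ Set.Icc 0 x₀, |φ y| ≤ S := fun y hy =>
    hmax ⟨hy.1, hy.2.trans hx₀.2⟩
  have hI : |∫ y in (0:ℝ)..x₀, φ (x₀ - y) * k y| ≤ S :=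
    (abs_integral_mul_comp_sub_le hx₀.1 (hk.intervalIntegrable _ _)
      (fun y hy => hk_nonneg y hy.1) hbound).trans
      (mul_le_of_le_one_right (abs_nonneg _) (hk_mass x₀ hx₀.1))
  have hcS : c * S ≤ lam * S := by
    calc c * S = |lam * ∫ y in (0:ℝ)..x₀, φ (x₀ - y) * k y| := by
          rw [← heq x₀ hx₀.1, abs_mul, abs_of_pos (hlam.trans_lt hc)]
      _ ≤ lam * S := by
          rw [abs_mul, abs_of_nonneg hlam]
          exact mul_le_mul_of_nonneg_left hI hlam
  have hS : S = 0 := le_antisymm (by nlinarith) (abs_nonneg _)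
  exact abs_nonpos_iff.1 (hS ▸ hmax ⟨hu₀, le_rfl⟩)

theorem volterra_conv_unique {f g h : ℝ → ℝ} (hf : Continuous f) (hg : Continuous g)
    (hk : Continuous k) (hk_nonneg : ∀ y, 0 ≤ y → 0 ≤ k y)
    (hk_mass : ∀ u, 0 ≤ u → ∫ y in (0:ℝ)..u, k y ≤ 1) (hlam : 0 ≤ lam) (hc : lam < c)
    (hf_eq : ∀ u ≥ (0:ℝ), c * f u = lam * (∫ y in (0:ℝ)..u, f (u - y) * k y) + h u)
    (hg_eq : ∀ u ≥ (0:ℝ), c * g u = lam * (∫ y in (0:ℝ)..u, g (u - y) * k y) + h u) :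
    ∀ u ≥ (0:ℝ), f u = g u := by
  have hconv : ∀ {ψ : ℝ → ℝ} (u : ℝ), Continuous ψ →
      IntervalIntegrable (fun y => ψ (u - y) * k y) volume 0 u := fun u hψ =>
    ((hψ.comp (continuous_sub_left u)).mul hk).intervalIntegrable _ _
  have hdiff := volterra_conv_eq_zero (φ := f - g) (hf.sub hg) hk hk_nonneg hk_mass hlam hc
    fun u hu => by
      simp only [Pi.sub_apply, sub_mul]
      rw [intervalIntegral.integral_sub (hconv u hf) (hconv u hg)]
      linear_combination hf_eq u hu - hg_eq u hu
  exact fun u hu => sub_eq_zero.1 (hdiff u hu)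

end Volterra

/-- The μ → 0 limit equation of the fractional Poisson risk model with Exp(α)
claims: `ψ₀(u) = (λ₂/(1+λ₂)) e^{−αu/(1+λ₂)}` solves
`(1 + λ₂)ψ₀(u) = λ₂ ∫_0^u ψ₀(u−y) α e^{−αy} dy + λ₂ e^{−αu}` with `ψ₀(u) → 0`,
and it is the unique bounded continuous such solution. In particular
`ψ₀(0) = λ₂/(λ₂+1)`. -/
theorem stmt16 (lam₂ α : ℝ) (hlam₂ : 0 < lam₂) (hα : 0 < α) :
    let ψ₀ : ℝ → ℝ := fun u => lam₂ / (1 + lam₂) * Real.exp (-α * u / (1 + lam₂))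
    (∀ u ≥ (0 : ℝ),
        (1 + lam₂) * ψ₀ u
          = lam₂ * (∫ y in (0:ℝ)..u, ψ₀ (u - y) * (α * Real.exp (-α * y)))
              + lam₂ * Real.exp (-α * u)) ∧
    Tendsto ψ₀ atTop (nhds 0) ∧
    (∀ ψ : ℝ → ℝ, Continuous ψ → (∃ M : ℝ, ∀ u ≥ (0 : ℝ), |ψ u| ≤ M) →
      Tendsto ψ atTop (nhds 0) →
      (∀ u ≥ (0 : ℝ),
        (1 + lam₂) * ψ u
          = lam₂ * (∫ y in (0:ℝ)..u, ψ (u - y) * (α * Real.exp (-α * y)))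
              + lam₂ * Real.exp (-α * u)) →
      ∀ u ≥ (0 : ℝ), ψ u = ψ₀ u) ∧
    ψ₀ 0 = lam₂ / (lam₂ + 1) := by
  intro ψ₀
  have hpos : 0 < 1 + lam₂ := by linarith
  set b := α / (1 + lam₂)
  have hb : 0 < b := div_pos hα hpos
  have hψ₀ : ψ₀ = fun u => lam₂ / (1 + lam₂) * exp (-b * u) := by
    funext u; simp only [ψ₀, b]; ring_nf
  have hsol : ∀ u ≥ (0 : ℝ), (1 + lam₂) * ψ₀ u
      = lam₂ * (∫ y in (0:ℝ)..u, ψ₀ (u - y) * (α * exp (-α * y))) + lam₂ * exp (-α * u) := by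
    intro u _
    have hba : b < α := div_lt_self hα (lt_add_of_pos_right 1 hlam₂)
    have hcoef : lam₂ / (1 + lam₂) * α / (α - b) = 1 := by
      rw [div_eq_one_iff_eq (sub_pos.2 hba).ne']
      simp only [b]
      field_simp
      ring
    simp only [hψ₀]
    rw [integral_exp_mul_exp_density hba.ne, hcoef]
    field_simp
    ring
  refine ⟨hsol, ?_, fun ψ hψ _ _ hψ_eq => ?_, by simp [ψ₀, add_comm]⟩
  · rw [hψ₀]
    simpa using ((tendsto_exp_atBot.comp
      (tendsto_id.const_mul_atTop_of_neg (neg_lt_zero.2 hb))).const_mul (lam₂ / (1 + lam₂)))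
  · exact volterra_conv_unique hψ (by rw [hψ₀]; fun_prop) (by fun_prop)
      (fun y _ => by positivity)
      (fun u _ => by rw [integral_exp_density]; linarith [exp_pos (-α * u)])
      hlam₂.le (lt_one_add lam₂) hψ_eq hsol
end

section
/- For r > 0 and any continuous function f : [0, b] → ℝ, the left Riemann-Liouville fractional derivative of order r is a left inverse of the left Riemann-Liouville fractional integral of order r: D_0^r (I_0^r f)(x) = f(x) for all x ∈ (0, b). -/
/-!
Write `n = ⌊r⌋₊ + 1`. By Fubini on the triangle `0 < z < y < t` and the Beta integral
`∫_z^t (t - y)^(a-1) (y - z)^(c-1) dy = B(a, c) (t - z)^(a+c-1)`, fractional integrals compose: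
`I^a (I^c f) = I^(a+c) f`. Hence `D^r (I^r f) = (d/dx)^n I^(n-r) (I^r f) = (d/dx)^n I^n f`.
Since `I^1` is the primitive from `0`, the same semigroup law gives `I^(k+1) f = I^1 (I^k f)`,
and `n` applications of the fundamental theorem of calculus recover `f`.
-/

open MeasureTheory intervalIntegral

/-- Left Riemann-Liouville fractional integral of order `r` with lower limit `0`. -/
noncomputable def RLint (r : ℝ) (f : ℝ → ℝ) : ℝ → ℝ :=
  fun x => (1 / Real.Gamma r) * ∫ y in (0:ℝ)..x, (x - y) ^ (r - 1) * f y

/-- Left Riemann-Liouville fractional derivative of order `r` with lower limit `0`. -/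
noncomputable def RLderiv (r : ℝ) (f : ℝ → ℝ) : ℝ → ℝ :=
  fun x =>
    iteratedDeriv (⌊r⌋₊ + 1)
      (fun t => (1 / Real.Gamma ((⌊r⌋₊ + 1 : ℕ) - r)) *
        ∫ y in (0:ℝ)..t, (t - y) ^ (((⌊r⌋₊ + 1 : ℕ) : ℝ) - r - 1) * f y) x

open Set Filter Topology
open Real (Gamma)
open ProbabilityTheory (beta)

section Beta

theorem integral_rpow_mul_one_sub_rpow {a c : ℝ} (ha : 0 < a) (hc : 0 < c) :
    ∫ s in (0:ℝ)..1, s ^ (a - 1) * (1 - s) ^ (c - 1) = beta a c := by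
  have hcast : Complex.betaIntegral a c
      = ↑(∫ s in (0:ℝ)..1, s ^ (a - 1) * (1 - s) ^ (c - 1)) := by
    rw [Complex.betaIntegral, ← intervalIntegral.integral_ofReal]
    refine intervalIntegral.integral_congr fun s hs => ?_
    rw [uIcc_of_le zero_le_one] at hs
    push_cast
    rw [Complex.ofReal_cpow hs.1, Complex.ofReal_cpow (sub_nonneg.2 hs.2)]
    push_cast
    ring
  rw [ProbabilityTheory.beta_eq_betaIntegralReal a c ha hc, hcast, Complex.ofReal_re]

variable {a c z t : ℝ}

theorem integral_sub_rpow_mul_sub_rpow (ha : 0 < a) (hc : 0 < c) (hzt : z < t) :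
    ∫ y in z..t, (t - y) ^ (a - 1) * (y - z) ^ (c - 1) = beta a c * (t - z) ^ (a + c - 1) := by
  have htz : 0 < t - z := sub_pos.2 hzt
  have hsubst := intervalIntegral.integral_comp_mul_add
    (fun y => (t - y) ^ (a - 1) * (y - z) ^ (c - 1)) htz.ne' z (a := 0) (b := 1)
  have hscale : ∀ s ∈ uIcc (0:ℝ) 1,
      (t - ((t - z) * s + z)) ^ (a - 1) * ((t - z) * s + z - z) ^ (c - 1)
        = (t - z) ^ (a + c - 2) * (s ^ (c - 1) * (1 - s) ^ (a - 1)) := by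
    intro s hs
    rw [uIcc_of_le zero_le_one] at hs
    rw [show t - ((t - z) * s + z) = (t - z) * (1 - s) by ring,
      show (t - z) * s + z - z = (t - z) * s by ring,
      Real.mul_rpow htz.le (sub_nonneg.2 hs.2), Real.mul_rpow htz.le hs.1,
      show a + c - 2 = (a - 1) + (c - 1) by ring, Real.rpow_add htz]
    ring
  rw [intervalIntegral.integral_congr hscale, intervalIntegral.integral_const_mul,
    integral_rpow_mul_one_sub_rpow hc ha, mul_zero, zero_add, mul_one, sub_add_cancel,
    smul_eq_mul, eq_inv_mul_iff_mul_eq₀ htz.ne'] at hsubst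
  rw [← hsubst, ProbabilityTheory.beta, ProbabilityTheory.beta, add_comm c a, mul_comm (Gamma c),
    show a + c - 1 = (a + c - 2) + 1 by ring, Real.rpow_add_one htz.ne']
  ring

theorem intervalIntegrable_sub_rpow_mul_sub_rpow (ha : 0 < a) (hc : 0 < c) (hzt : z < t) :
    IntervalIntegrable (fun y => (t - y) ^ (a - 1) * (y - z) ^ (c - 1)) volume z t := by
  -- the Bochner integral of a non-integrable function is `0`
  refine intervalIntegral.intervalIntegrable_of_integral_ne_zero ?_
  rw [integral_sub_rpow_mul_sub_rpow ha hc hzt]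
  exact (mul_pos (ProbabilityTheory.beta_pos ha hc) (Real.rpow_pos_of_pos (sub_pos.2 hzt) _)).ne'

end Beta

section Triangle

variable {t : ℝ}

theorem setIntegral_Ioo_ite_lt_left {y : ℝ} (hy : y ∈ Ioo 0 t) (g : ℝ → ℝ) :
    ∫ z in Ioo 0 t, (if z < y then g z else 0) = ∫ z in (0:ℝ)..y, g z := by
  have := setIntegral_indicator (μ := volume) (s := Ioo 0 t) (measurableSet_Iio (a := y)) (f := g)
  simp only [indicator_apply, mem_Iio, Ioo_inter_Iio, min_eq_right hy.2.le] at this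
  rw [this, intervalIntegral.integral_of_le hy.1.le, integral_Ioc_eq_integral_Ioo]

theorem setIntegral_Ioo_ite_lt_right {z : ℝ} (hz : z ∈ Ioo 0 t) (g : ℝ → ℝ) :
    ∫ y in Ioo 0 t, (if z < y then g y else 0) = ∫ y in z..t, g y := by
  have := setIntegral_indicator (μ := volume) (s := Ioo 0 t) (measurableSet_Ioi (a := z)) (f := g)
  simp only [indicator_apply, mem_Ioi, Ioo_inter_Ioi, max_eq_right hz.1.le] at this
  rw [this, intervalIntegral.integral_of_le hz.2.le, integral_Ioc_eq_integral_Ioo]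

theorem integrableOn_Ioo_ite_lt_right {z : ℝ} (hz : z ∈ Ioo 0 t) {g : ℝ → ℝ}
    (hg : IntervalIntegrable g volume z t) :
    IntegrableOn (fun y => if z < y then g y else 0) (Ioo 0 t) := by
  have hind : (fun y => if z < y then g y else 0) = (Ioi z).indicator g := by
    ext y
    simp [indicator_apply]
  rw [hind, integrableOn_indicator_iff measurableSet_Ioi, Ioi_inter_Ioo, max_eq_left hz.1.le]
  exact (intervalIntegrable_iff_integrableOn_Ioo_of_le hz.2.le).1 hg

theorem intervalIntegral_integral_swap_triangle (ht : 0 ≤ t) {F : ℝ → ℝ → ℝ}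
    (hF : Integrable (fun p : ℝ × ℝ => if p.2 < p.1 then F p.1 p.2 else 0)
      ((volume.restrict (Ioo 0 t)).prod (volume.restrict (Ioo 0 t)))) :
    ∫ y in (0:ℝ)..t, ∫ z in (0:ℝ)..y, F y z = ∫ z in (0:ℝ)..t, ∫ y in z..t, F y z := by
  rw [intervalIntegral.integral_of_le ht, integral_Ioc_eq_integral_Ioo,
    intervalIntegral.integral_of_le ht, integral_Ioc_eq_integral_Ioo]
  convert integral_integral_swap (f := fun y z => if z < y then F y z else 0) hF using 1
  · exact setIntegral_congr_fun measurableSet_Ioo fun y hy =>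
      (setIntegral_Ioo_ite_lt_left hy (F y)).symm
  · exact setIntegral_congr_fun measurableSet_Ioo fun z hz =>
      (setIntegral_Ioo_ite_lt_right hz (F · z)).symm

theorem integrableOn_Ioo_sub_rpow {r : ℝ} (hr : -1 < r) :
    IntegrableOn (fun z => (t - z) ^ r) (Ioo 0 t) := by
  have hpow : IntervalIntegrable (fun z => (t - z) ^ r) volume 0 t := by
    simpa using ((intervalIntegral.intervalIntegrable_rpow' hr (a := 0) (b := t)).comp_sub_left
      t).symm
  exact (intervalIntegrable_iff.1 hpow).mono_set (Ioo_subset_Ioc_self.trans Ioc_subset_uIoc)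

variable {a c : ℝ} {f : ℝ → ℝ}

theorem setIntegral_norm_RLint_RLint_integrand (ha : 0 < a) (hc : 0 < c) {z : ℝ}
    (hz : z ∈ Ioo 0 t) :
    ∫ y in Ioo 0 t, ‖if z < y then (t - y) ^ (a - 1) * (y - z) ^ (c - 1) * f z else 0‖
      = ‖f z‖ * (beta a c * (t - z) ^ (a + c - 1)) := by
  simp only [apply_ite norm, norm_zero]
  rw [setIntegral_Ioo_ite_lt_right hz, ← integral_sub_rpow_mul_sub_rpow ha hc hz.2,
    ← intervalIntegral.integral_const_mul]
  refine intervalIntegral.integral_congr fun y hy => ?_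
  rw [uIcc_of_le hz.2.le] at hy
  simp only [norm_mul, Real.norm_of_nonneg (Real.rpow_nonneg (sub_nonneg.2 hy.1) _),
    Real.norm_of_nonneg (Real.rpow_nonneg (sub_nonneg.2 hy.2) _)]
  ring

theorem integrable_RLint_RLint_integrand (ha : 0 < a) (hc : 0 < c)
    (hf : ContinuousOn f (Icc 0 t)) :
    Integrable (fun p : ℝ × ℝ =>
        if p.2 < p.1 then (t - p.1) ^ (a - 1) * (p.1 - p.2) ^ (c - 1) * f p.2 else 0)
      ((volume.restrict (Ioo 0 t)).prod (volume.restrict (Ioo 0 t))) := by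
  have hfm : AEStronglyMeasurable f (volume.restrict (Ioo 0 t)) :=
    (hf.mono Ioo_subset_Icc_self).aestronglyMeasurable measurableSet_Ioo
  have hind : (fun p : ℝ × ℝ =>
      if p.2 < p.1 then (t - p.1) ^ (a - 1) * (p.1 - p.2) ^ (c - 1) * f p.2 else 0)
        = {p : ℝ × ℝ | p.2 < p.1}.indicator
            (fun p => (t - p.1) ^ (a - 1) * (p.1 - p.2) ^ (c - 1) * f p.2) := by
    ext p
    simp [indicator_apply]
  have hmeas : AEStronglyMeasurable ({p : ℝ × ℝ | p.2 < p.1}.indicator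
      (fun p => (t - p.1) ^ (a - 1) * (p.1 - p.2) ^ (c - 1) * f p.2))
      ((volume.restrict (Ioo 0 t)).prod (volume.restrict (Ioo 0 t))) :=
    ((Measurable.aestronglyMeasurable
      (by fun_prop : Measurable fun p : ℝ × ℝ => (t - p.1) ^ (a - 1) * (p.1 - p.2) ^ (c - 1))).mul
        hfm.comp_snd).indicator (measurableSet_lt measurable_snd measurable_fst)
  rw [hind, integrable_prod_iff' hmeas, ← hind]
  constructor
  · rw [ae_restrict_iff' measurableSet_Ioo]
    filter_upwards with z hz
    exact integrableOn_Ioo_ite_lt_right hz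
      ((intervalIntegrable_sub_rpow_mul_sub_rpow ha hc hz.2).mul_const (f z))
  · obtain ⟨M, hM⟩ := isCompact_Icc.exists_bound_of_continuousOn hf
    refine (Integrable.bdd_mul (c := M)
      ((integrableOn_Ioo_sub_rpow (r := a + c - 1) (by linarith)).const_mul (beta a c)) hfm.norm ?_).congr ?_
    · rw [ae_restrict_iff' measurableSet_Ioo]
      filter_upwards with z hz
      simpa using hM z (Ioo_subset_Icc_self hz)
    · rw [EventuallyEq, ae_restrict_iff' measurableSet_Ioo]
      filter_upwards with z hz
      rw [setIntegral_norm_RLint_RLint_integrand ha hc hz]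

end Triangle

theorem RLint_RLint {a c t : ℝ} (ha : 0 < a) (hc : 0 < c) (ht : 0 ≤ t) {f : ℝ → ℝ}
    (hf : ContinuousOn f (Icc 0 t)) :
    RLint a (RLint c f) t = RLint (a + c) f t := by
  have hpull : ∫ y in (0:ℝ)..t, (t - y) ^ (a - 1) * RLint c f y
      = 1 / Gamma c * ∫ y in (0:ℝ)..t, ∫ z in (0:ℝ)..y,
          (t - y) ^ (a - 1) * (y - z) ^ (c - 1) * f z := by
    rw [← intervalIntegral.integral_const_mul]
    refine intervalIntegral.integral_congr fun y _ => ?_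
    simp only [RLint, ← intervalIntegral.integral_const_mul]
    congr 1 with z
    ring
  have hinner : ∫ z in (0:ℝ)..t, ∫ y in z..t, (t - y) ^ (a - 1) * (y - z) ^ (c - 1) * f z
      = ∫ z in (0:ℝ)..t, beta a c * ((t - z) ^ (a + c - 1) * f z) := by
    -- at `z = t` the two sides differ when `a + c = 1`, since `0 ^ 0 = 1`
    refine intervalIntegral.integral_congr_ae ?_
    filter_upwards [Measure.ae_ne volume t] with z hzt hz
    rw [uIoc_of_le ht] at hz
    rw [intervalIntegral.integral_mul_const,
      integral_sub_rpow_mul_sub_rpow ha hc (lt_of_le_of_ne hz.2 hzt), mul_assoc]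
  rw [RLint, hpull, intervalIntegral_integral_swap_triangle ht
    (integrable_RLint_RLint_integrand ha hc hf), hinner, intervalIntegral.integral_const_mul,
    ProbabilityTheory.beta, RLint]
  have hΓa := Real.Gamma_pos_of_pos ha
  have hΓc := Real.Gamma_pos_of_pos hc
  have hΓac := Real.Gamma_pos_of_pos (add_pos ha hc)
  field_simp

theorem RLint_one (f : ℝ → ℝ) : RLint 1 f = fun t => ∫ s in (0:ℝ)..t, f s := by
  ext t
  simp [RLint]

section NatOrder

variable {f : ℝ → ℝ} {b : ℝ}

theorem continuousOn_RLint_one (hf : ContinuousOn f (Icc 0 b)) :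
    ContinuousOn (RLint 1 f) (Icc 0 b) := by
  rcases le_or_gt 0 b with hb | hb
  · rw [RLint_one, ← uIcc_of_le hb]
    exact intervalIntegral.continuousOn_primitive_interval (uIcc_of_le hb ▸ hf.integrableOn_Icc)
  · simp [Icc_eq_empty_of_lt hb]

theorem hasDerivAt_RLint_one (hf : ContinuousOn f (Icc 0 b)) {x : ℝ} (hx : x ∈ Ioo 0 b) :
    HasDerivAt (RLint 1 f) (f x) x := by
  rw [RLint_one]
  refine intervalIntegral.integral_hasDerivAt_right ?_ ?_ ?_
  · exact (hf.mono (Icc_subset_Icc_right hx.2.le)).intervalIntegrable_of_Icc hx.1.le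
  · exact (hf.mono Ioo_subset_Icc_self).stronglyMeasurableAtFilter isOpen_Ioo x hx
  · exact hf.continuousAt (Icc_mem_nhds hx.1 hx.2)

theorem eqOn_RLint_nat_succ (hf : ContinuousOn f (Icc 0 b)) {n : ℕ} (hn : n ≠ 0) :
    EqOn (RLint (n + 1 : ℕ) f) (RLint 1 (RLint n f)) (Icc 0 b) := fun t ht => by
  rw [RLint_RLint one_pos (by positivity) ht.1 (hf.mono (Icc_subset_Icc_right ht.2)), add_comm]
  push_cast
  rfl

theorem continuousOn_RLint_nat (hf : ContinuousOn f (Icc 0 b)) {n : ℕ} (hn : n ≠ 0) :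
    ContinuousOn (RLint n f) (Icc 0 b) := by
  induction n with
  | zero => exact absurd rfl hn
  | succ n ih =>
    rcases eq_or_ne n 0 with rfl | hn
    · simpa using continuousOn_RLint_one hf
    · exact (continuousOn_RLint_one (ih hn)).congr (eqOn_RLint_nat_succ hf hn)

theorem iteratedDeriv_RLint_nat (hf : ContinuousOn f (Icc 0 b)) {n : ℕ} (hn : n ≠ 0) {x : ℝ}
    (hx : x ∈ Ioo 0 b) : iteratedDeriv n (RLint n f) x = f x := by
  induction n generalizing x with
  | zero => exact absurd rfl hn
  | succ n ih =>
    rcases eq_or_ne n 0 with rfl | hn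
    · simpa using (hasDerivAt_RLint_one hf hx).deriv
    · have hderiv : deriv (RLint (n + 1 : ℕ) f) =ᶠ[𝓝 x] RLint n f := by
        filter_upwards [isOpen_Ioo.mem_nhds hx] with y hy
        rw [((eqOn_RLint_nat_succ hf hn).eventuallyEq_of_mem (Icc_mem_nhds hy.1 hy.2)).deriv_eq]
        exact (hasDerivAt_RLint_one (continuousOn_RLint_nat hf hn) hy).deriv
      rw [iteratedDeriv_succ', hderiv.iteratedDeriv_eq, ih hn hx]

end NatOrder

theorem stmt18_general (r b : ℝ) (hr : 0 < r) (f : ℝ → ℝ)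
    (hf : ContinuousOn f (Set.Icc 0 b)) :
    ∀ x ∈ Set.Ioo (0 : ℝ) b, RLderiv r (RLint r f) x = f x := by
  intro x hx
  set n := ⌊r⌋₊ + 1
  have hrn : r < n := by simpa [n] using Nat.lt_floor_add_one r
  have hsemigroup : RLint (n - r) (RLint r f) =ᶠ[𝓝 x] RLint n f := by
    filter_upwards [Ioo_mem_nhds hx.1 hx.2] with t ht
    rw [RLint_RLint (sub_pos.2 hrn) hr ht.1.le (hf.mono (Icc_subset_Icc_right ht.2.le)),
      sub_add_cancel]
  calc RLderiv r (RLint r f) x = iteratedDeriv n (RLint (n - r) (RLint r f)) x := rfl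
    _ = iteratedDeriv n (RLint n f) x := hsemigroup.iteratedDeriv_eq n
    _ = f x := iteratedDeriv_RLint_nat hf (Nat.add_one_ne_zero _) hx

/-- The left Riemann-Liouville fractional derivative of order `r` is a left inverse
of the fractional integral of order `r` on continuous functions. -/
theorem stmt18 (r b : ℝ) (hr : 0 < r) (hb : 0 < b) (f : ℝ → ℝ)
    (hf : ContinuousOn f (Set.Icc 0 b)) :
    ∀ x ∈ Set.Ioo (0 : ℝ) b, RLderiv r (RLint r f) x = f x :=
  stmt18_general r b hr f hf
end
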